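/- arXiv:1505.08148 — 8 statements merged into one kernel-verified Lean document; each statement's English description precedes it below -/
import Mathlib

section
/- Let C be a monoidal category and let (P, η) be a unital idempotent in C. Let X and Y be objects of C such that the composite λ_Y⁻¹ ≫ (η ▷ Y) : Y → P ⊗ Y is an isomorphism. Then the map Hom(P ⊗ X, Y) → Hom(X, Y) given by precomposition with λ_X⁻¹ ≫ (η ▷ X) : X → P ⊗ X is a bijection. -/
open CategoryTheory MonoidalCategory

/-- Let `(P, η)` be a unital idempotent in a monoidal category `C`
(i.e. `η ▷ P` and `P ◁ η` are isomorphisms).  If `Y` is an object such that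
`λ_Y⁻¹ ≫ (η ▷ Y) : Y ⟶ P ⊗ Y` is an isomorphism, then for any object `X`,
precomposition with `λ_X⁻¹ ≫ (η ▷ X) : X ⟶ P ⊗ X` is a bijection
`Hom(P ⊗ X, Y) → Hom(X, Y)`. -/
theorem statement0 {C : Type*} [Category C] [MonoidalCategory C]
    (P : C) (η : 𝟙_ C ⟶ P)
    (hη₁ : IsIso (η ▷ P)) (hη₂ : IsIso (P ◁ η))
    (X Y : C) (hY : IsIso ((λ_ Y).inv ≫ η ▷ Y)) :
    Function.Bijective (fun f : P ⊗ X ⟶ Y => ((λ_ X).inv ≫ η ▷ X) ≫ f) := by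
  haveI := hY
  set u : ∀ Z : C, Z ⟶ P ⊗ Z := fun Z => (λ_ Z).inv ≫ η ▷ Z with hu
  have nat : ∀ {Z W : C} (f : Z ⟶ W), u Z ≫ P ◁ f = f ≫ u W := by
    intro Z W f
    simp only [hu, Category.assoc]
    rw [← whisker_exchange, ← MonoidalCategory.leftUnitor_inv_naturality_assoc]
  have h1 : IsIso (u (P ⊗ X)) := by
    have : u (P ⊗ X) = (λ_ (P ⊗ X)).inv ≫ (α_ _ _ _).inv ≫ (η ▷ P) ▷ X ≫ (α_ _ _ _).hom := by
      simp [hu]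
    rw [this]; infer_instance
  have h2 : IsIso (P ◁ u X) := by
    have : P ◁ u X = P ◁ (λ_ X).inv ≫ (α_ _ _ _).inv ≫ (P ◁ η) ▷ X ≫ (α_ _ _ _).hom := by
      simp [hu]
    rw [this]; infer_instance
  constructor
  · intro f f' h
    simp only at h
    have hw : P ◁ u X ≫ P ◁ f = P ◁ u X ≫ P ◁ f' := by
      rw [← MonoidalCategory.whiskerLeft_comp, ← MonoidalCategory.whiskerLeft_comp, h]
    have hff : P ◁ f = P ◁ f' := by rwa [cancel_epi (P ◁ u X)] at hw
    have := nat f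
    rw [hff, nat f'] at this
    exact ((cancel_mono (u Y)).mp this.symm).symm.symm
  · intro g
    refine ⟨P ◁ g ≫ inv (u Y), ?_⟩
    simp only
    rw [← Category.assoc]
    show (u X ≫ P ◁ g) ≫ inv (u Y) = g
    rw [nat g, Category.assoc, IsIso.hom_inv_id, Category.comp_id]
end

section
/- Let C be a monoidal category and let (P, η) be a unital idempotent in C. Then the map Hom(P, P) → Hom(𝟙, P) given by precomposition with η (that is, f ↦ η ≫ f) is a bijection. -/
open CategoryTheory MonoidalCategory

/-- Let `(P, η)` be a unital idempotent in a monoidal category `C`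
(i.e. `η ▷ P` and `P ◁ η` are isomorphisms).  Then precomposition with `η`
gives a bijection `Hom(P, P) → Hom(𝟙, P)`. -/
theorem statement1 {C : Type*} [Category C] [MonoidalCategory C]
    (P : C) (η : 𝟙_ C ⟶ P)
    (hη₁ : IsIso (η ▷ P)) (hη₂ : IsIso (P ◁ η)) :
    Function.Bijective (fun f : P ⟶ P => η ≫ f) := by
  constructor
  · intro f g h
    simp only at h
    have h1 : (η ≫ f) ▷ P = (η ≫ g) ▷ P := by rw [h]
    rw [comp_whiskerRight, comp_whiskerRight, cancel_epi] at h1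
    have h2 : f ▷ 𝟙_ C ≫ P ◁ η = g ▷ 𝟙_ C ≫ P ◁ η := by
      rw [← whisker_exchange, ← whisker_exchange, h1]
    rw [cancel_mono] at h2
    calc f = (ρ_ P).inv ≫ f ▷ 𝟙_ C ≫ (ρ_ P).hom := by simp
      _ = (ρ_ P).inv ≫ g ▷ 𝟙_ C ≫ (ρ_ P).hom := by rw [h2]
      _ = g := by simp
  · intro u
    refine ⟨(λ_ P).inv ≫ u ▷ P ≫ inv (P ◁ η) ≫ (ρ_ P).hom, ?_⟩
    simp only
    have h1 : η ≫ (λ_ P).inv = (λ_ (𝟙_ C)).inv ≫ 𝟙_ C ◁ η := by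
      simp
    rw [← Category.assoc, h1, Category.assoc, ← Category.assoc (𝟙_ C ◁ η),
      whisker_exchange u η]
    simp [← MonoidalCategory.unitors_equal]
end

section
/- Let C be a monoidal category and let (P, η) be a unital idempotent in C. Then the two morphisms P → P ⊗ P given by λ_P⁻¹ ≫ (η ▷ P) and ρ_P⁻¹ ≫ (P ◁ η) are equal, where λ_P and ρ_P are the left and right unitors of P. -/
open CategoryTheory MonoidalCategory

/-- Let `(P, η)` be a unital idempotent in a monoidal category `C`
(i.e. `η ▷ P` and `P ◁ η` are isomorphisms).  Then the two morphisms
`P ⟶ P ⊗ P` given by `λ_P⁻¹ ≫ (η ▷ P)` and `ρ_P⁻¹ ≫ (P ◁ η)` coincide. -/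
theorem statement2 {C : Type*} [Category C] [MonoidalCategory C]
    (P : C) (η : 𝟙_ C ⟶ P)
    (hη₁ : IsIso (η ▷ P)) (hη₂ : IsIso (P ◁ η)) :
    (λ_ P).inv ≫ η ▷ P = (ρ_ P).inv ≫ P ◁ η := by
  set f : P ⟶ P ⊗ P := (λ_ P).inv ≫ η ▷ P with hf
  set g : P ⟶ P ⊗ P := (ρ_ P).inv ≫ P ◁ η with hg
  have h0 : η ≫ f = η ≫ g := by
    rw [hf, hg]
    rw [← Category.assoc, ← Category.assoc, leftUnitor_inv_naturality,
      rightUnitor_inv_naturality, Category.assoc, Category.assoc,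
      whisker_exchange, unitors_inv_equal]
  have h1 : f ▷ P = g ▷ P := by
    have := congrArg (· ▷ P) h0
    simp only [comp_whiskerRight] at this
    exact (cancel_epi (η ▷ P)).mp this
  have hiso : IsIso ((P ⊗ P) ◁ η) := by
    have : (P ⊗ P) ◁ η = (α_ P P (𝟙_ C)).hom ≫ P ◁ (P ◁ η) ≫ (α_ P P P).inv := by
      simp
    rw [this]; infer_instance
  have h2 : f ≫ (ρ_ (P ⊗ P)).inv ≫ (P ⊗ P) ◁ η
      = g ≫ (ρ_ (P ⊗ P)).inv ≫ (P ⊗ P) ◁ η := by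
    rw [← Category.assoc, ← Category.assoc, rightUnitor_inv_naturality,
      rightUnitor_inv_naturality, Category.assoc, Category.assoc,
      ← whisker_exchange, ← whisker_exchange, h1]
  simpa using (cancel_mono ((ρ_ (P ⊗ P)).inv ≫ (P ⊗ P) ◁ η)).mp h2
end

section
/- Let C be a monoidal category and let (P, η) be a unital idempotent in C. Then for every endomorphism f : P → P one has f ▷ P = P ◁ f as endomorphisms of P ⊗ P, i.e. f ⊗ id_P = id_P ⊗ f. -/
open CategoryTheory MonoidalCategory

/-- Let `(P, η)` be a unital idempotent in a monoidal category `C`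
(i.e. `η ▷ P` and `P ◁ η` are isomorphisms).  Then for every `f : P ⟶ P`
one has `f ▷ P = P ◁ f` as endomorphisms of `P ⊗ P`. -/
theorem statement3 {C : Type*} [Category C] [MonoidalCategory C]
    (P : C) (η : 𝟙_ C ⟶ P)
    (hη₁ : IsIso (η ▷ P)) (hη₂ : IsIso (P ◁ η)) :
    ∀ f : P ⟶ P, f ▷ P = P ◁ f := by
  set a : P ⟶ P ⊗ P := (λ_ P).inv ≫ η ▷ P with ha
  set b : P ⟶ P ⊗ P := (ρ_ P).inv ≫ P ◁ η with hb
  have hai : IsIso a := by rw [ha]; infer_instance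
  have hbi : IsIso b := by rw [hb]; infer_instance
  -- `a` conjugates left whiskering
  have hA : ∀ g : P ⟶ P, a ≫ (P ◁ g) = g ≫ a := by
    intro g
    rw [ha, Category.assoc, ← whisker_exchange, ← Category.assoc,
      ← MonoidalCategory.leftUnitor_inv_naturality, Category.assoc]
  -- `b` conjugates right whiskering
  have hB : ∀ g : P ⟶ P, b ≫ (g ▷ P) = g ≫ b := by
    intro g
    rw [hb, Category.assoc, whisker_exchange, ← Category.assoc,
      ← MonoidalCategory.rightUnitor_inv_naturality, Category.assoc]
  -- η ≫ a = η ≫ b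
  have hab : η ≫ a = η ≫ b := by
    rw [ha, hb, ← Category.assoc, ← Category.assoc,
      MonoidalCategory.leftUnitor_inv_naturality,
      MonoidalCategory.rightUnitor_inv_naturality,
      MonoidalCategory.unitors_inv_equal,
      Category.assoc, Category.assoc, whisker_exchange]
  -- t fixes η
  set t : P ⟶ P := a ≫ inv b with ht
  have hηt : η ≫ t = η := by
    rw [ht, ← Category.assoc, hab, Category.assoc, IsIso.hom_inv_id, Category.comp_id]
  -- t ▷ P = 𝟙
  have htP : t ▷ P = 𝟙 (P ⊗ P) := by
    have : η ▷ P ≫ t ▷ P = η ▷ P ≫ 𝟙 (P ⊗ P) := by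
      rw [← comp_whiskerRight, hηt, Category.comp_id]
    exact (cancel_epi (η ▷ P)).mp this
  -- hence t = 𝟙, so a = b
  have htid : t = 𝟙 P := by
    have := hB t
    rw [htP, Category.comp_id] at this
    exact ((cancel_mono b).mp (by rw [← this, Category.id_comp])).symm
  have hab' : a = b := by
    have : t ≫ b = a := by rw [ht, Category.assoc, IsIso.inv_hom_id, Category.comp_id]
    rw [← this, htid, Category.id_comp]
  intro f
  have h1 : a ≫ f ▷ P = a ≫ P ◁ f := by
    rw [hA f, hab', hB f]
  exact (cancel_epi a).mp h1
end

section
/- Let C be a monoidal category and let (P, η) be a unital idempotent in C. Then the endomorphism monoid of P is commutative: for all f, g : P → P one has f ≫ g = g ≫ f. -/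
open CategoryTheory MonoidalCategory

/-- Auxiliary Eckmann–Hilton style lemma: if there are two isomorphisms `σ τ : Q ⟶ P`
such that the `σ`-conjugate of any endomorphism of `P` commutes with the `τ`-conjugate
of any endomorphism, then `End P` is commutative. -/
lemma statement4_aux {C : Type*} [Category C] {Q P : C} (σ τ : Q ⟶ P)
    [IsIso σ] [IsIso τ]
    (h : ∀ a b : P ⟶ P,
      σ ≫ a ≫ inv σ ≫ τ ≫ b ≫ inv τ = τ ≫ b ≫ inv τ ≫ σ ≫ a ≫ inv σ) :
    ∀ f g : P ⟶ P, f ≫ g = g ≫ f := by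
  have G : ∀ f g : P ⟶ P, f ≫ g = g ≫ inv τ ≫ σ ≫ f ≫ inv σ ≫ τ := by
    intro f g
    have h2 := h f (inv τ ≫ σ ≫ g)
    calc f ≫ g
        = inv σ ≫ (σ ≫ f ≫ inv σ ≫ τ ≫ (inv τ ≫ σ ≫ g) ≫ inv τ) ≫ τ := by simp
      _ = inv σ ≫ (τ ≫ (inv τ ≫ σ ≫ g) ≫ inv τ ≫ σ ≫ f ≫ inv σ) ≫ τ := by rw [h2]
      _ = g ≫ inv τ ≫ σ ≫ f ≫ inv σ ≫ τ := by simp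
  intro f g
  have G1 := G f (𝟙 _)
  rw [Category.id_comp] at G1
  rw [G f g, ← G1]
  simp

/-- Let `(P, η)` be a unital idempotent in a monoidal category `C`
(i.e. `η ▷ P` and `P ◁ η` are isomorphisms).  Then the endomorphism monoid of `P`
is commutative. -/
theorem statement4 {C : Type*} [Category C] [MonoidalCategory C]
    (P : C) (η : 𝟙_ C ⟶ P)
    (hη₁ : IsIso (η ▷ P)) (hη₂ : IsIso (P ◁ η)) :
    ∀ f g : P ⟶ P, f ≫ g = g ≫ f := by
  haveI := hη₁; haveI := hη₂
  have hσ : ∀ a : P ⟶ P,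
      P ◁ a = (inv (η ▷ P) ≫ (λ_ P).hom) ≫ a ≫ inv (inv (η ▷ P) ≫ (λ_ P).hom) := by
    intro a
    have e := whisker_exchange η a
    rw [← cancel_epi (η ▷ P), ← e]
    simp
  have hτ : ∀ b : P ⟶ P,
      b ▷ P = (inv (P ◁ η) ≫ (ρ_ P).hom) ≫ b ≫ inv (inv (P ◁ η) ≫ (ρ_ P).hom) := by
    intro b
    have e := whisker_exchange b η
    rw [← cancel_epi (P ◁ η), e]
    simp
  refine statement4_aux (inv (η ▷ P) ≫ (λ_ P).hom) (inv (P ◁ η) ≫ (ρ_ P).hom) ?_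
  intro a b
  have := whisker_exchange b a
  rw [hσ a, hτ b] at this
  simpa [Category.assoc] using this
end

section
/- Let C be a monoidal category and let (P, η) be a unital idempotent in C. For morphisms α, β : 𝟙 → P define their product α · β : 𝟙 → P as the composite λ_𝟙⁻¹ ≫ (α ⊗ β) ≫ (η ▷ P)⁻¹ ≫ λ_P, using that η ▷ P : 𝟙 ⊗ P → P ⊗ P is an isomorphism. Then for all f, g : P → P one has (η ≫ f) · (η ≫ g) = η ≫ f ≫ g; that is, precomposition with η carries composition in End(P) to the tensor-induced product on Hom(𝟙, P). -/
/-!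
Write `m := inv (η ▷ P) ≫ λ_P : P ⊗ P ⟶ P`. It is natural in its right argument, and `η` is a unit
for it on both sides: on the left by construction, and on the right because endomorphisms of `P`
are determined by their precomposition with `η` (whisker by `P` and cancel the isomorphisms
`η ▷ P` and `P ◁ η`). Expanding `(η ≫ f) ⊗ (η ≫ g)` as `(η ≫ f) ▷ 𝟙 ≫ P ◁ η ≫ P ◁ g`, naturality
moves `g` past `m` and the right unit law removes `η`.
-/

open CategoryTheory Category MonoidalCategory

namespace CategoryTheory.MonoidalCategory

variable {C : Type*} [Category C] [MonoidalCategory C] {P : C} (η : 𝟙_ C ⟶ P)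

lemma whiskerRight_eq_of_comp_eq [Epi (η ▷ P)] {X : C} {h k : P ⟶ X} (H : η ≫ h = η ≫ k) :
    h ▷ P = k ▷ P := by
  rw [← cancel_epi (η ▷ P), ← comp_whiskerRight, H, comp_whiskerRight]

lemma eq_of_whiskerRight_eq [Mono (P ◁ η)] {X : C} {x y : X ⟶ P} (H : x ▷ P = y ▷ P) :
    x = y := by
  have hunit : x ▷ 𝟙_ C = y ▷ 𝟙_ C := by
    rw [← cancel_mono (P ◁ η), ← whisker_exchange, ← whisker_exchange, H]
  simpa using congrArg (fun u => (ρ_ X).inv ≫ u ≫ (ρ_ P).hom) hunit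

lemma eq_of_unit_comp_eq [Epi (η ▷ P)] [Mono (P ◁ η)] {h k : P ⟶ P} (H : η ≫ h = η ≫ k) :
    h = k :=
  eq_of_whiskerRight_eq η (whiskerRight_eq_of_comp_eq η H)

lemma whiskerLeft_comp_inv_whiskerRight_comp_leftUnitor {X Y : C} (g : X ⟶ Y)
    [IsIso (η ▷ X)] [IsIso (η ▷ Y)] :
    P ◁ g ≫ inv (η ▷ Y) ≫ (λ_ Y).hom = inv (η ▷ X) ≫ (λ_ X).hom ≫ g := by
  rw [← leftUnitor_naturality, ← cancel_epi (η ▷ X), IsIso.hom_inv_id_assoc,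
    ← whisker_exchange_assoc, IsIso.hom_inv_id_assoc]

lemma whiskerLeft_comp_inv_whiskerRight_comp_leftUnitor_self [IsIso (η ▷ P)] [IsIso (P ◁ η)] :
    P ◁ η ≫ inv (η ▷ P) ≫ (λ_ P).hom = (ρ_ P).hom := by
  suffices h : (ρ_ P).inv ≫ P ◁ η ≫ inv (η ▷ P) ≫ (λ_ P).hom = 𝟙 P by
    simpa using (ρ_ P).hom ≫= h
  refine eq_of_unit_comp_eq η ?_
  -- `η ▷ 𝟙 ≫ P ◁ η = 𝟙 ◁ η ≫ η ▷ P`, and `λ_𝟙 = ρ_𝟙`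
  rw [rightUnitor_inv_naturality_assoc, ← whisker_exchange_assoc, IsIso.hom_inv_id_assoc,
    leftUnitor_naturality, unitors_equal, Iso.inv_hom_id_assoc, comp_id]

end CategoryTheory.MonoidalCategory

/-- Let `(P, η)` be a unital idempotent in a monoidal category `C`
(i.e. `η ▷ P` and `P ◁ η` are isomorphisms).  For `α β : 𝟙 ⟶ P` define
`α · β := λ_𝟙⁻¹ ≫ (α ⊗ β) ≫ (η ▷ P)⁻¹ ≫ λ_P`.  Then for all `f g : P ⟶ P`,
`(η ≫ f) · (η ≫ g) = η ≫ f ≫ g`. -/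
theorem statement5 {C : Type*} [Category C] [MonoidalCategory C]
    (P : C) (η : 𝟙_ C ⟶ P)
    [IsIso (η ▷ P)] [IsIso (P ◁ η)] :
    ∀ f g : P ⟶ P,
      (λ_ (𝟙_ C)).inv ≫ ((η ≫ f) ⊗ₘ (η ≫ g)) ≫ inv (η ▷ P) ≫ (λ_ P).hom
        = η ≫ f ≫ g := by
  intro f g
  calc (λ_ (𝟙_ C)).inv ≫ ((η ≫ f) ⊗ₘ (η ≫ g)) ≫ inv (η ▷ P) ≫ (λ_ P).hom
      = (λ_ (𝟙_ C)).inv ≫ (η ≫ f) ▷ 𝟙_ C ≫ P ◁ η ≫ P ◁ g ≫ inv (η ▷ P) ≫ (λ_ P).hom := by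
        simp only [MonoidalCategory.tensorHom_def, whiskerLeft_comp, assoc]
    _ = (λ_ (𝟙_ C)).inv ≫ (η ≫ f) ▷ 𝟙_ C ≫ (P ◁ η ≫ inv (η ▷ P) ≫ (λ_ P).hom) ≫ g := by
        simp only [whiskerLeft_comp_inv_whiskerRight_comp_leftUnitor, assoc]
    _ = (λ_ (𝟙_ C)).inv ≫ (η ≫ f) ▷ 𝟙_ C ≫ (ρ_ P).hom ≫ g := by
        rw [whiskerLeft_comp_inv_whiskerRight_comp_leftUnitor_self]
    _ = η ≫ f ≫ g := by
        rw [rightUnitor_naturality_assoc, ← unitors_equal, Iso.inv_hom_id_assoc, assoc]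
end

section
/- Let C be a monoidal category and let (P, η) be a unital idempotent in C. For morphisms α, β : 𝟙 → P define α · β : 𝟙 → P as the composite λ_𝟙⁻¹ ≫ (α ⊗ β) ≫ (η ▷ P)⁻¹ ≫ λ_P. Then this product makes Hom(𝟙, P) into a commutative monoid with unit element η: the product is associative, commutative, and satisfies η · α = α = α · η for all α : 𝟙 → P. -/
/-!
Write `μ := (η ▷ P)⁻¹ ≫ λ_P : P ⊗ P ⟶ P`. Then `α · β = α ≫ R β = β ≫ L α` for the right and left
translations `R β, L α : P ⟶ P` built from `μ`. The key fact is that an endomorphism of `P` is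
determined by its precomposite with `η` (as `η ▷ P` is epi and `P ◁ η` is mono); it gives
`R η = 𝟙` besides the evident `L η = 𝟙`, and then forces `L α = R α` (commutativity) and
`L α ≫ R γ = R γ ≫ L α` (associativity).
-/

open CategoryTheory MonoidalCategory

noncomputable def umul {C : Type*} [CategoryTheory.Category C]
    [CategoryTheory.MonoidalCategory C] {P : C} (η : 𝟙_ C ⟶ P)
    [CategoryTheory.IsIso (η ▷ P)] (α β : 𝟙_ C ⟶ P) : 𝟙_ C ⟶ P :=
  (λ_ (𝟙_ C)).inv ≫ (α ⊗ₘ β) ≫ CategoryTheory.inv (η ▷ P) ≫ (λ_ P).hom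

namespace UnitalIdempotent

variable {C : Type*} [Category C] [MonoidalCategory C] {P : C} (η : 𝟙_ C ⟶ P)

lemma eq_of_whiskerRight_eq {X Y : C} [Mono (Y ◁ η)] {f g : X ⟶ Y} (h : f ▷ P = g ▷ P) :
    f = g := by
  have hexch : f ▷ 𝟙_ C ≫ Y ◁ η = g ▷ 𝟙_ C ≫ Y ◁ η := by
    rw [← whisker_exchange, ← whisker_exchange, h]
  have hunit : f ▷ 𝟙_ C = g ▷ 𝟙_ C := (cancel_mono _).mp hexch
  simpa only [whiskerRight_id, cancel_epi, cancel_mono] using hunit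

lemma eq_of_comp_eq [Epi (η ▷ P)] {Y : C} [Mono (Y ◁ η)] {f g : P ⟶ Y} (h : η ≫ f = η ≫ g) :
    f = g := by
  apply eq_of_whiskerRight_eq η
  rw [← cancel_epi (η ▷ P), ← comp_whiskerRight, ← comp_whiskerRight, h]

variable [IsIso (η ▷ P)]

noncomputable def mul : P ⊗ P ⟶ P := inv (η ▷ P) ≫ (λ_ P).hom

noncomputable def leftMul (α : 𝟙_ C ⟶ P) : P ⟶ P := (λ_ P).inv ≫ α ▷ P ≫ mul η

noncomputable def rightMul (β : 𝟙_ C ⟶ P) : P ⟶ P := (ρ_ P).inv ≫ P ◁ β ≫ mul η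

lemma whiskerRight_comp_mul : η ▷ P ≫ mul η = (λ_ P).hom := by
  simp [mul]

lemma leftMul_unit : leftMul η η = 𝟙 P := by
  simp [leftMul, whiskerRight_comp_mul]

lemma whiskerLeft_comp_mul [Mono (P ◁ η)] : P ◁ η ≫ mul η = (ρ_ P).hom := by
  rw [← cancel_epi (ρ_ P).inv, Iso.inv_hom_id]
  refine eq_of_comp_eq η ?_
  calc η ≫ (ρ_ P).inv ≫ P ◁ η ≫ mul η
      = (ρ_ (𝟙_ C)).inv ≫ (η ▷ 𝟙_ C ≫ P ◁ η) ≫ mul η := by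
        simp only [rightUnitor_inv_naturality_assoc, Category.assoc]
    _ = (λ_ (𝟙_ C)).inv ≫ 𝟙_ C ◁ η ≫ η ▷ P ≫ mul η := by
        rw [← whisker_exchange, unitors_inv_equal, Category.assoc]
    _ = η ≫ 𝟙 P := by
        rw [whiskerRight_comp_mul, leftUnitor_naturality, Iso.inv_hom_id_assoc, Category.comp_id]

lemma rightMul_unit [Mono (P ◁ η)] : rightMul η η = 𝟙 P := by
  simp [rightMul, whiskerLeft_comp_mul]

lemma umul_eq_comp_rightMul (α β : 𝟙_ C ⟶ P) : umul η α β = α ≫ rightMul η β := by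
  rw [umul, rightMul, mul, MonoidalCategory.tensorHom_def, Category.assoc, unitors_inv_equal,
    ← rightUnitor_inv_naturality_assoc]

lemma umul_eq_comp_leftMul (α β : 𝟙_ C ⟶ P) : umul η α β = β ≫ leftMul η α := by
  rw [umul, leftMul, mul, MonoidalCategory.tensorHom_def', Category.assoc,
    ← leftUnitor_inv_naturality_assoc]

lemma umul_unit_left (α : 𝟙_ C ⟶ P) : umul η η α = α := by
  rw [umul_eq_comp_leftMul, leftMul_unit, Category.comp_id]

lemma umul_unit_right [Mono (P ◁ η)] (α : 𝟙_ C ⟶ P) : umul η α η = α := by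
  rw [umul_eq_comp_rightMul, rightMul_unit, Category.comp_id]

lemma unit_comp_leftMul [Mono (P ◁ η)] (α : 𝟙_ C ⟶ P) : η ≫ leftMul η α = α := by
  rw [← umul_eq_comp_leftMul, umul_unit_right]

lemma unit_comp_rightMul (β : 𝟙_ C ⟶ P) : η ≫ rightMul η β = β := by
  rw [← umul_eq_comp_rightMul, umul_unit_left]

lemma leftMul_eq_rightMul [Mono (P ◁ η)] (α : 𝟙_ C ⟶ P) : leftMul η α = rightMul η α :=
  eq_of_comp_eq η (by rw [unit_comp_leftMul, unit_comp_rightMul])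

lemma leftMul_comp_rightMul_comm [Mono (P ◁ η)] (α γ : 𝟙_ C ⟶ P) :
    leftMul η α ≫ rightMul η γ = rightMul η γ ≫ leftMul η α := by
  refine eq_of_comp_eq η ?_
  rw [← Category.assoc, ← Category.assoc, unit_comp_leftMul, unit_comp_rightMul,
    ← umul_eq_comp_rightMul, ← umul_eq_comp_leftMul]

lemma umul_comm [Mono (P ◁ η)] (α β : 𝟙_ C ⟶ P) : umul η α β = umul η β α := by
  rw [umul_eq_comp_leftMul, umul_eq_comp_rightMul, leftMul_eq_rightMul]

lemma umul_assoc [Mono (P ◁ η)] (α β γ : 𝟙_ C ⟶ P) :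
    umul η (umul η α β) γ = umul η α (umul η β γ) := by
  rw [umul_eq_comp_rightMul η _ γ, umul_eq_comp_leftMul η α β, umul_eq_comp_leftMul η α,
    umul_eq_comp_rightMul η β γ, Category.assoc, Category.assoc, leftMul_comp_rightMul_comm]

end UnitalIdempotent

open UnitalIdempotent in
/-- Let `(P, η)` be a unital idempotent in a monoidal category `C`
(i.e. `η ▷ P` and `P ◁ η` are isomorphisms).  The product
`α · β := λ_𝟙⁻¹ ≫ (α ⊗ β) ≫ (η ▷ P)⁻¹ ≫ λ_P` makes `Hom(𝟙, P)` a commutative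
monoid with unit `η`. -/
theorem statement6 {C : Type*} [Category C] [MonoidalCategory C]
    (P : C) (η : 𝟙_ C ⟶ P)
    [IsIso (η ▷ P)] [IsIso (P ◁ η)] :
    (∀ α β γ : 𝟙_ C ⟶ P, umul η (umul η α β) γ = umul η α (umul η β γ)) ∧
    (∀ α β : 𝟙_ C ⟶ P, umul η α β = umul η β α) ∧
    (∀ α : 𝟙_ C ⟶ P, umul η η α = α) ∧
    (∀ α : 𝟙_ C ⟶ P, umul η α η = α) :=
  ⟨umul_assoc η, umul_comm η, umul_unit_left η, umul_unit_right η⟩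
end

section
/- Let R be a ring, let C be a cochain complex of R-modules, and let f : C → C be a chain map. Let D = ⊕_{k ∈ ℕ} C be the degreewise countable direct sum of copies of C, and let Ψ : D → D be the chain map whose component from the k-th summand to the k-th summand is f and whose component from the k-th summand to the (k+1)-st summand is −id_C, all other components being zero. Then the inclusion of C as the 0-th summand of D inside the mapping cone of Ψ is a homotopy equivalence C → Cone(Ψ); moreover, the endomorphism u of Cone(Ψ) induced by shifting every summand (both in the shifted and unshifted copy of D) from index k to index k+1 satisfies: u composed with this inclusion is chain homotopic to the inclusion composed with f. -/
open CategoryTheory CategoryTheory.Limits CochainComplex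

variable {R : Type} [Ring R]

/-- The degreewise countable direct sum `D = ⊕_{k ∈ ℕ} C` of copies of a cochain
complex `C` of `R`-modules. -/
noncomputable def Dsum (C : CochainComplex (ModuleCat R) ℤ) : CochainComplex (ModuleCat R) ℤ :=
  ∐ (fun _ : ℕ => C)

/-- The chain map `Ψ : D ⟶ D` whose component from the `k`-th summand to the `k`-th
summand is `f`, and whose component from the `k`-th summand to the `(k+1)`-st summand
is `-id`. -/
noncomputable def Psi (C : CochainComplex (ModuleCat R) ℤ) (f : C ⟶ C) : Dsum C ⟶ Dsum C :=
  Sigma.desc (fun k => f ≫ Sigma.ι (fun _ : ℕ => C) k - Sigma.ι (fun _ : ℕ => C) (k + 1))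

/-- The inclusion of `C` as the `0`-th summand of `D` inside the mapping cone of `Ψ`. -/
noncomputable def incl (C : CochainComplex (ModuleCat R) ℤ) (f : C ⟶ C) :
    C ⟶ mappingCone (Psi C f) :=
  Sigma.ι (fun _ : ℕ => C) 0 ≫ mappingCone.inr (Psi C f)

/-- The shift endomorphism of `D` sending the `k`-th summand identically
to the `(k+1)`-st summand. -/
noncomputable def shiftD (C : CochainComplex (ModuleCat R) ℤ) : Dsum C ⟶ Dsum C :=
  Sigma.desc (fun k => Sigma.ι (fun _ : ℕ => C) (k + 1))

lemma shiftD_comm (C : CochainComplex (ModuleCat R) ℤ) (f : C ⟶ C) :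
    Psi C f ≫ shiftD C = shiftD C ≫ Psi C f := by
  apply Limits.Sigma.hom_ext
  intro k
  first
  | simp [Psi, shiftD, Dsum]
  | (dsimp only [Psi, shiftD, Dsum]
     rw [← Category.assoc, ← Category.assoc]
     erw [Limits.Sigma.ι_desc, Limits.Sigma.ι_desc]
     rw [Preadditive.sub_comp, Category.assoc]
     erw [Limits.Sigma.ι_desc, Limits.Sigma.ι_desc, Limits.Sigma.ι_desc])

/-- The endomorphism `u` of `Cone(Ψ)` induced by shifting every summand (in both the
shifted and unshifted copy of `D`) from index `k` to index `k + 1`. -/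
noncomputable def uEndo (C : CochainComplex (ModuleCat R) ℤ) (f : C ⟶ C) :
    mappingCone (Psi C f) ⟶ mappingCone (Psi C f) :=
  mappingCone.map (Psi C f) (Psi C f) (shiftD C) (shiftD C) (shiftD_comm C f)

/-! `Ψ` is a split monomorphism with complement `C`: for `π = (f ^ k)ₖ : D ⟶ C` and
`σ (ιⱼ) = -∑_{i<j} f ^ i ≫ ι_{j-1-i}` one has `Ψ ≫ σ = 𝟙` and `σ ≫ Ψ = 𝟙 - π ≫ ι₀`.
The cone of such a split monomorphism deformation retracts onto the complement: `(0, π)` is a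
homotopy inverse of `ι₀ ≫ inr`, the homotopy being `snd ≫ σ ≫ inl`. For the shift, `u` sends
`ι₀` to `ι₁ = f ≫ ι₀ - ι₀ ≫ Ψ`, and `Ψ ≫ inr` is null-homotopic. -/

section Telescope

variable {V : Type*} [Category V] {X : V} [HasCoproduct fun _ : ℕ => X] (f : X ⟶ X)

local notation "ι" => Sigma.ι (fun _ : ℕ => X)

noncomputable def telescopeProj : ∐ (fun _ : ℕ => X) ⟶ X :=
  Sigma.desc fun k => End.of f ^ k

lemma ι_telescopeProj (k : ℕ) : ι k ≫ telescopeProj f = End.of f ^ k :=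
  Sigma.ι_desc _ _

lemma ι_zero_telescopeProj : ι 0 ≫ telescopeProj f = 𝟙 X :=
  ι_telescopeProj f 0

variable [Preadditive V]

noncomputable def telescopeDiff : ∐ (fun _ : ℕ => X) ⟶ ∐ (fun _ : ℕ => X) :=
  Sigma.desc fun k => f ≫ ι k - ι (k + 1)

noncomputable def telescopeContraction : ∐ (fun _ : ℕ => X) ⟶ ∐ (fun _ : ℕ => X) :=
  Sigma.desc fun j => -∑ i ∈ Finset.range j, (End.of f ^ i) ≫ ι (j - 1 - i)

lemma ι_telescopeDiff (k : ℕ) : ι k ≫ telescopeDiff f = f ≫ ι k - ι (k + 1) :=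
  Sigma.ι_desc _ _

lemma ι_telescopeContraction (k : ℕ) :
    ι k ≫ telescopeContraction f = -∑ i ∈ Finset.range k, (End.of f ^ i) ≫ ι (k - 1 - i) :=
  Sigma.ι_desc _ _

lemma telescopeDiff_telescopeContraction :
    telescopeDiff f ≫ telescopeContraction f = 𝟙 _ := by
  refine Sigma.hom_ext _ _ fun k => ?_
  rw [← Category.assoc, ι_telescopeDiff, Preadditive.sub_comp, Category.assoc,
    ι_telescopeContraction, ι_telescopeContraction, Finset.sum_range_succ', Category.comp_id]
  have hshift : ∑ i ∈ Finset.range k, (End.of f ^ (i + 1)) ≫ ι (k + 1 - 1 - (i + 1))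
      = ∑ i ∈ Finset.range k, f ≫ (End.of f ^ i) ≫ ι (k - 1 - i) :=
    Finset.sum_congr rfl fun i _ => by
      rw [pow_succ, End.mul_def, Category.assoc, show k + 1 - 1 - (i + 1) = k - 1 - i by omega]
  rw [hshift]
  simp only [Preadditive.comp_neg, Preadditive.comp_sum, pow_zero, End.one_def,
    Category.id_comp, Nat.add_sub_cancel, Nat.sub_zero]
  abel

lemma telescopeContraction_telescopeDiff :
    telescopeContraction f ≫ telescopeDiff f = 𝟙 _ - telescopeProj f ≫ ι 0 := by
  refine Sigma.hom_ext _ _ fun k => ?_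
  rw [← Category.assoc, ι_telescopeContraction, Preadditive.neg_comp, Preadditive.sum_comp]
  have htelescope : ∀ i ∈ Finset.range k,
      ((End.of f ^ i) ≫ ι (k - 1 - i)) ≫ telescopeDiff f =
        (End.of f ^ (i + 1)) ≫ ι (k - (i + 1)) - (End.of f ^ i) ≫ ι (k - i) := by
    intro i hi
    rw [Finset.mem_range] at hi
    rw [Category.assoc, ι_telescopeDiff, Preadditive.comp_sub, ← Category.assoc, pow_succ',
      End.mul_def, show k - 1 - i + 1 = k - i by omega, show k - 1 - i = k - (i + 1) by omega]
  rw [Finset.sum_congr rfl htelescope, Finset.sum_range_sub fun i => (End.of f ^ i) ≫ ι (k - i)]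
  simp only [Nat.sub_self, Nat.sub_zero, pow_zero, End.one_def, Category.id_comp,
    Preadditive.comp_sub, Category.comp_id, ← Category.assoc, ι_telescopeProj]
  abel

end Telescope

lemma comp_eq_zero_of_split {V : Type*} [Category V] [Preadditive V] {K L C : V}
    {φ : K ⟶ L} {i : C ⟶ L} {p : L ⟶ C} {σ : L ⟶ K}
    (hip : i ≫ p = 𝟙 C) (hφσ : φ ≫ σ = 𝟙 K) (hσφ : σ ≫ φ = 𝟙 L - p ≫ i) : φ ≫ p = 0 :=
  calc φ ≫ p = φ ≫ (p ≫ i) ≫ p := by rw [Category.assoc, hip, Category.comp_id]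
    _ = (φ - (φ ≫ σ) ≫ φ) ≫ p := by
        rw [← sub_sub_cancel (𝟙 L) (p ≫ i), ← hσφ]
        simp only [Preadditive.comp_sub, Preadditive.sub_comp, Category.id_comp, Category.assoc]
    _ = 0 := by rw [hφσ, Category.id_comp, sub_self, zero_comp]

section MappingCone

open HomComplex

variable {V : Type*} [Category V] [Preadditive V] {K L : CochainComplex V ℤ}
  (φ : K ⟶ L) [HomologicalComplex.HasHomotopyCofiber φ]

noncomputable def homotopyCompMappingConeInr {M : CochainComplex V ℤ} {a b : M ⟶ L}
    (g : M ⟶ K) (h : g ≫ φ = b - a) :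
    Homotopy (a ≫ mappingCone.inr φ) (b ≫ mappingCone.inr φ) := by
  refine (Cochain.equivHomotopy _ _).symm
    ⟨-(Cochain.ofHom g).comp (mappingCone.inl φ) (zero_add (-1)), ?_⟩
  rw [δ_neg, δ_zero_cochain_comp _ _ _ (neg_add_cancel 1), δ_ofHom, mappingCone.δ_inl]
  simp only [Cochain.zero_comp, smul_zero, add_zero, ← Cochain.ofHom_comp, ← Category.assoc, h,
    Preadditive.sub_comp, Cochain.ofHom_sub]
  abel

lemma mappingCone_id_eq_δ_add {C : CochainComplex V ℤ} {i : C ⟶ L} {p : L ⟶ C} {σ : L ⟶ K}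
    (hφσ : φ ≫ σ = 𝟙 K) (hσφ : σ ≫ φ = 𝟙 L - p ≫ i) (hφp : φ ≫ p = 0) :
    Cochain.ofHom (𝟙 (mappingCone φ)) =
      δ (-1) 0 ((mappingCone.snd φ).comp
        ((Cochain.ofHom σ).comp (mappingCone.inl φ) (zero_add (-1))) (zero_add (-1))) +
      Cochain.ofHom (mappingCone.desc φ 0 p (by simp [hφp]) ≫ i ≫ mappingCone.inr φ) := by
  have hδ : δ (-1) 0 ((Cochain.ofHom σ).comp (mappingCone.inl φ) (zero_add (-1))) =
      Cochain.ofHom (mappingCone.inr φ) - Cochain.ofHom ((p ≫ i) ≫ mappingCone.inr φ) := by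
    rw [δ_zero_cochain_comp _ _ _ (neg_add_cancel 1), δ_ofHom, mappingCone.δ_inl]
    simp only [Cochain.zero_comp, smul_zero, add_zero]
    rw [← Cochain.ofHom_comp, ← Category.assoc, hσφ, Preadditive.sub_comp, Category.id_comp,
      Cochain.ofHom_sub]
  have hdesc : Cochain.ofHom (mappingCone.desc φ 0 p (by simp [hφp]) ≫ i ≫ mappingCone.inr φ) =
      (mappingCone.snd φ).comp (Cochain.ofHom ((p ≫ i) ≫ mappingCone.inr φ)) (add_zero 0) := by
    rw [Cochain.ofHom_comp, mappingCone.ofHom_desc, mappingCone.descCochain, Cochain.comp_zero,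
      zero_add, Cochain.comp_assoc_of_second_is_zero_cochain, ← Cochain.ofHom_comp,
      Category.assoc]
  rw [← mappingCone.id φ, δ_zero_cochain_comp _ _ _ (neg_add_cancel 1), hδ, mappingCone.δ_snd,
    hdesc]
  simp only [Cochain.comp_sub, Cochain.neg_comp, Units.neg_smul, neg_neg,
    show ((-1 : ℤ)).negOnePow = -1 by simp [Int.negOnePow_neg, Int.negOnePow_one],
    one_smul, smul_neg]
  rw [Cochain.comp_assoc_of_second_is_zero_cochain,
    ← Cochain.comp_assoc_of_first_is_zero_cochain, ← Cochain.ofHom_comp, hφσ, Cochain.id_comp]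
  abel

noncomputable def mappingConeHomotopyEquivOfSplit {C : CochainComplex V ℤ} (i : C ⟶ L)
    (p : L ⟶ C) (σ : L ⟶ K) (hip : i ≫ p = 𝟙 C) (hφσ : φ ≫ σ = 𝟙 K)
    (hσφ : σ ≫ φ = 𝟙 L - p ≫ i) : HomotopyEquiv C (mappingCone φ) where
  hom := i ≫ mappingCone.inr φ
  inv := mappingCone.desc φ 0 p (by simp [comp_eq_zero_of_split hip hφσ hσφ])
  homotopyHomInvId := Homotopy.ofEq (by rw [Category.assoc, mappingCone.inr_desc, hip])
  homotopyInvHomId := ((Cochain.equivHomotopy _ _).symm ⟨_,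
    mappingCone_id_eq_δ_add φ hφσ hσφ (comp_eq_zero_of_split hip hφσ hσφ)⟩).symm

end MappingCone

lemma incl_uEndo (C : CochainComplex (ModuleCat R) ℤ) (f : C ⟶ C) :
    incl C f ≫ uEndo C f = Sigma.ι (fun _ : ℕ => C) 1 ≫ mappingCone.inr (Psi C f) :=
  calc incl C f ≫ uEndo C f
      = Sigma.ι (fun _ : ℕ => C) 0 ≫ mappingCone.inr (Psi C f) ≫ uEndo C f := Category.assoc _ _ _
    _ = Sigma.ι (fun _ : ℕ => C) 0 ≫ shiftD C ≫ mappingCone.inr (Psi C f) := by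
        rw [uEndo, mappingCone.map]
        exact congrArg (Sigma.ι (fun _ : ℕ => C) 0 ≫ ·) (mappingCone.inr_desc (Psi C f) _ _ _)
    _ = Sigma.ι (fun _ : ℕ => C) 1 ≫ mappingCone.inr (Psi C f) :=
        (Category.assoc _ _ _).symm.trans
          (congrArg (· ≫ mappingCone.inr (Psi C f)) (Sigma.ι_desc _ 0))

/-- Let `C` be a cochain complex of `R`-modules, `f : C ⟶ C` a chain
map, `D = ⊕_{k ∈ ℕ} C`, and `Ψ : D ⟶ D` the map with diagonal components `f` and
components `-id` from the `k`-th to the `(k+1)`-st summand.  Then the inclusion of `C`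
as the `0`-th summand inside `Cone(Ψ)` is a homotopy equivalence, and the shift
endomorphism `u` of `Cone(Ψ)` satisfies `incl ≫ u ≃ f ≫ incl` up to chain homotopy. -/
theorem statement10 (C : CochainComplex (ModuleCat R) ℤ) (f : C ⟶ C) :
    (∃ e : HomotopyEquiv C (mappingCone (Psi C f)), e.hom = incl C f) ∧
      Nonempty (Homotopy (incl C f ≫ uEndo C f) (f ≫ incl C f)) := by
  refine ⟨⟨mappingConeHomotopyEquivOfSplit (Psi C f) _ (telescopeProj f) (telescopeContraction f)
    (ι_zero_telescopeProj f) (telescopeDiff_telescopeContraction f)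
    (telescopeContraction_telescopeDiff f), rfl⟩, ?_⟩
  rw [incl_uEndo]
  exact ⟨(homotopyCompMappingConeInr (Psi C f) (Sigma.ι _ 0) (ι_telescopeDiff f 0)).trans
    (Homotopy.ofEq (Category.assoc _ _ _))⟩
end
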